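/- arXiv:2204.11278 — 2 statements merged into one kernel-verified Lean document; each statement's English description precedes it below -/
import Mathlib

section
/- For Hermitian positive-definite matrices A, B ∈ C^{N×N}, the unique Hermitian positive-definite solution X of the algebraic Riccati equation X A X = B is X = A^{-1/2} (A^{1/2} B A^{1/2})^{1/2} A^{-1/2}. -/
open Matrix
open scoped ComplexOrder

open Classical in
/-- The unique positive semidefinite square root of a positive semidefinite matrix
(junk value `1` otherwise). -/
noncomputable def msqrt {n : ℕ} (A : Matrix (Fin n) (Fin n) ℂ) : Matrix (Fin n) (Fin n) ℂ :=
  if h : A.PosSemidef then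
    (h.1.eigenvectorUnitary : Matrix (Fin n) (Fin n) ℂ) *
      diagonal (((↑) : ℝ → ℂ) ∘ Real.sqrt ∘ h.1.eigenvalues) *
      (star h.1.eigenvectorUnitary : Matrix (Fin n) (Fin n) ℂ)
  else 1

namespace Matrix.PosSemidef

variable {m : Type*} [Fintype m] [DecidableEq m] {P : Matrix m m ℂ}

/-- The eigen-decomposition square root of a positive semidefinite matrix. -/
noncomputable abbrev sqrt (hP : P.PosSemidef) : Matrix m m ℂ :=
  (hP.1.eigenvectorUnitary : Matrix m m ℂ) *
    diagonal (((↑) : ℝ → ℂ) ∘ Real.sqrt ∘ hP.1.eigenvalues) *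
    (star hP.1.eigenvectorUnitary : Matrix m m ℂ)

open scoped MatrixOrder in
lemma sqrt_eq_cfcSqrt (hP : P.PosSemidef) : hP.sqrt = CFC.sqrt P := by
  rw [CFC.sqrt_eq_cfc, cfc_nnreal_eq_real _ P hP.nonneg, hP.1.cfc_eq]
  simp only [IsHermitian.cfc, sqrt, Unitary.conjStarAlgAut_apply]
  congr 3
  funext i
  simp [Real.coe_sqrt, Real.coe_toNNReal', max_eq_left (hP.eigenvalues_nonneg i)]

open scoped MatrixOrder in
lemma posSemidef_sqrt (hP : P.PosSemidef) : hP.sqrt.PosSemidef := by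
  rw [sqrt_eq_cfcSqrt]
  exact nonneg_iff_posSemidef.mp (CFC.sqrt_nonneg P)

open scoped MatrixOrder in
lemma sqrt_mul_self (hP : P.PosSemidef) : hP.sqrt * hP.sqrt = P := by
  rw [sqrt_eq_cfcSqrt]
  exact CFC.sqrt_mul_sqrt_self P hP.nonneg

open scoped MatrixOrder in
lemma eq_sqrt_of_sq_eq {Y : Matrix m m ℂ} (hY : Y.PosSemidef) (hP : P.PosSemidef)
    (h : Y ^ 2 = P) : Y = hP.sqrt := by
  rw [sqrt_eq_cfcSqrt]
  exact (CFC.sqrt_unique (by rw [← sq]; exact h) hY.nonneg).symm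

end Matrix.PosSemidef

/-- Conjugation of a positive definite matrix by an invertible matrix is positive definite. -/
lemma posDef_conj {n : Type*} [Fintype n] [DecidableEq n] {P S : Matrix n n ℂ}
    (hP : P.PosDef) (hS : IsUnit S) : (Sᴴ * P * S).PosDef := by
  refine PosDef.of_dotProduct_mulVec_pos (isHermitian_conjTranspose_mul_mul S hP.1) fun x hx => ?_
  have hx' : S *ᵥ x ≠ 0 := by
    intro h
    exact hx (Matrix.mulVec_injective_iff_isUnit.2 hS (by simpa using h))
  simpa only [star_mulVec, dotProduct_mulVec, vecMul_vecMul] using hP.dotProduct_mulVec_pos hx'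

/-- A positive semidefinite invertible matrix is positive definite. -/
lemma posDef_of_posSemidef_isUnit {n : Type*} [Fintype n] [DecidableEq n]
    {P : Matrix n n ℂ} (hP : P.PosSemidef) (hU : IsUnit P) : P.PosDef := by
  refine PosDef.of_dotProduct_mulVec_pos hP.1 fun x hx => ?_
  set R := hP.sqrt with hR
  have hRR : R * R = P := hP.sqrt_mul_self
  have key : star x ⬝ᵥ P *ᵥ x = star (R *ᵥ x) ⬝ᵥ (R *ᵥ x) := by
    rw [← hRR, ← mulVec_mulVec, dotProduct_mulVec]
    congr 1
    rw [star_mulVec, hP.posSemidef_sqrt.1]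
  refine lt_of_le_of_ne (hP.dotProduct_mulVec_nonneg x) fun h0 => ?_
  have hRx : R *ᵥ x = 0 := by
    exact dotProduct_star_self_eq_zero.mp (key.symm.trans h0.symm)
  have hPx : P *ᵥ x = 0 := by rw [← hRR, ← mulVec_mulVec, hRx, mulVec_zero]
  exact hx (Matrix.mulVec_injective_iff_isUnit.2 hU (by simpa using hPx))

theorem riccati_unique_solution {N : ℕ} (A B : Matrix (Fin N) (Fin N) ℂ)
    (hA : A.PosDef) (hB : B.PosDef) :
    (((msqrt A)⁻¹ * msqrt (msqrt A * B * msqrt A) * (msqrt A)⁻¹).PosDef ∧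
      ((msqrt A)⁻¹ * msqrt (msqrt A * B * msqrt A) * (msqrt A)⁻¹) * A *
        ((msqrt A)⁻¹ * msqrt (msqrt A * B * msqrt A) * (msqrt A)⁻¹) = B) ∧
    ∀ X : Matrix (Fin N) (Fin N) ℂ, X.PosDef → X * A * X = B →
      X = (msqrt A)⁻¹ * msqrt (msqrt A * B * msqrt A) * (msqrt A)⁻¹ := by
  have hAs := hA.posSemidef
  set S := msqrt A with hSdef
  have hSeq : S = hAs.sqrt := by rw [hSdef, msqrt, dif_pos hAs]
  have hSps : S.PosSemidef := hSeq ▸ hAs.posSemidef_sqrt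
  have hSS : S * S = A := by rw [hSeq]; exact hAs.sqrt_mul_self
  have hSunit : IsUnit S := by
    rw [Matrix.isUnit_iff_isUnit_det]
    have : IsUnit (S * S).det := hSS ▸ hA.isUnit.map detMonoidHom
    rw [Matrix.det_mul] at this
    exact isUnit_of_mul_isUnit_left this
  have hSH : Sᴴ = S := hSps.1
  have hSpd : S.PosDef := posDef_of_posSemidef_isUnit hSps hSunit
  haveI : Invertible S := hSunit.invertible
  -- the middle matrix
  have hM : (S * B * S).PosDef := by
    have := posDef_conj hB hSunit
    rwa [hSH] at this
  have hMs := hM.posSemidef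
  set T := msqrt (S * B * S) with hTdef
  have hTeq : T = hMs.sqrt := by rw [hTdef, msqrt, dif_pos hMs]
  have hTps : T.PosSemidef := hTeq ▸ hMs.posSemidef_sqrt
  have hTT : T * T = S * B * S := by rw [hTeq]; exact hMs.sqrt_mul_self
  have hSinvH : (S⁻¹)ᴴ = S⁻¹ := by rw [Matrix.conjTranspose_nonsing_inv, hSH]
  have hTunit : IsUnit T := by
    rw [Matrix.isUnit_iff_isUnit_det]
    have : IsUnit (T * T).det := by
      rw [hTT]
      exact hM.isUnit.map detMonoidHom
    rw [Matrix.det_mul] at this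
    exact isUnit_of_mul_isUnit_left this
  have hTpd : T.PosDef := posDef_of_posSemidef_isUnit hTps hTunit
  have hXpd : (S⁻¹ * T * S⁻¹).PosDef := by
    have := posDef_conj hTpd hSpd.inv.isUnit
    rwa [hSinvH] at this
  refine ⟨⟨hXpd, ?_⟩, ?_⟩
  · have h1 : S⁻¹ * T * S⁻¹ * A * (S⁻¹ * T * S⁻¹) = S⁻¹ * (T * T) * S⁻¹ := by
      rw [← hSS]
      simp only [Matrix.mul_assoc, Matrix.inv_mul_cancel_left_of_invertible,
        Matrix.mul_inv_cancel_left_of_invertible]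
    rw [h1, hTT]
    simp only [Matrix.mul_assoc, Matrix.inv_mul_cancel_left_of_invertible,
      Matrix.mul_inv_cancel_left_of_invertible, Matrix.mul_inv_of_invertible, Matrix.mul_one]
  · intro X hX hXAX
    have hY : (S * X * S).PosSemidef := by
      have := (posDef_conj hX hSunit)
      rw [hSH] at this
      exact this.posSemidef
    have hYsq : (S * X * S) ^ 2 = S * B * S := by
      rw [pow_two, ← hXAX, ← hSS]
      rw [show S * X * S * (S * X * S) = S * (X * (S * S) * X) * S by
        simp [Matrix.mul_assoc]]
    have hYT : S * X * S = T := by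
      rw [hTeq]
      exact hY.eq_sqrt_of_sq_eq hMs hYsq
    calc X = S⁻¹ * (S * X * S) * S⁻¹ := by
            simp only [Matrix.mul_assoc, Matrix.inv_mul_cancel_left_of_invertible,
              Matrix.mul_inv_of_invertible, Matrix.mul_one]
      _ = S⁻¹ * T * S⁻¹ := by rw [hYT, Matrix.mul_assoc]
end

section
/- Let X be an invertible complex matrix with no eigenvalue on the closed negative real axis. Then for every real s, the matrices [(X − I)s + I]^{-1}, X, and Log X pairwise commute, and ∫_0^1 [(X − I)s + I]^{-2} ds = X^{-1}. -/
open Matrix MeasureTheory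
open scoped ComplexOrder

attribute [local instance] Matrix.frobeniusNormedAddCommGroup Matrix.frobeniusNormedSpace
attribute [local instance] Matrix.frobeniusNormedRing Matrix.frobeniusNormedAlgebra

private lemma commute_nonsing_inv_left {N : ℕ} (A B : Matrix (Fin N) (Fin N) ℂ)
    (h : Commute A B) : Commute A⁻¹ B := by
  by_cases hu : IsUnit A.det
  · have h1 : A⁻¹ * A = 1 := Matrix.nonsing_inv_mul A hu
    have h2 : A * A⁻¹ = 1 := Matrix.mul_nonsing_inv A hu
    show A⁻¹ * B = B * A⁻¹
    calc A⁻¹ * B = A⁻¹ * B * (A * A⁻¹) := by rw [h2, mul_one]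
      _ = A⁻¹ * (B * A) * A⁻¹ := by noncomm_ring
      _ = A⁻¹ * (A * B) * A⁻¹ := by rw [← h.eq]
      _ = (A⁻¹ * A) * (B * A⁻¹) := by noncomm_ring
      _ = B * A⁻¹ := by rw [h1, one_mul]
  · rw [Matrix.nonsing_inv_apply_not_isUnit A hu]
    exact Commute.zero_left B

private lemma unit_on_Icc {N : ℕ} (X : Matrix (Fin N) (Fin N) ℂ)
    (hspec : ∀ z ∈ spectrum ℂ X, ¬(z.im = 0 ∧ z.re ≤ 0))
    (s : ℝ) (hs : s ∈ Set.Icc (0:ℝ) 1) : IsUnit (s • (X - 1) + 1) := by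
  rcases eq_or_lt_of_le hs.1 with h0 | h0
  · simp [← h0]
  · set r : ℝ := (s - 1) / s with hr
    have hs0 : (s:ℂ) ≠ 0 := by exact_mod_cast h0.ne'
    have hAeq : s • (X - 1) + 1 = (Units.mk0 (s:ℂ) hs0) • (X - (r:ℂ) • 1) := by
      rw [Units.smul_def, Units.val_mk0]
      have hc : ((s:ℝ) • (X - 1) + 1 : Matrix (Fin N) (Fin N) ℂ)
          = (s:ℂ) • (X - 1) + 1 := by
        norm_num [Matrix.smul_of, algebraMap_smul]
      have hsr : (s:ℂ) * (r:ℂ) = (s:ℂ) - 1 := by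
        push_cast [hr]; field_simp
      rw [hc, smul_sub (s:ℂ) X ((r:ℂ) • 1), smul_smul, hsr, sub_smul, one_smul,
        smul_sub]
      abel
    rw [hAeq, isUnit_smul_iff]
    by_contra hnu
    have hmem : (r:ℂ) ∈ spectrum ℂ X := by
      rw [spectrum.mem_iff]
      intro hu
      apply hnu
      have : X - (r:ℂ) • 1 = -((algebraMap ℂ _) (r:ℂ) - X) := by
        simp [Algebra.algebraMap_eq_smul_one]
      rw [this]
      exact hu.neg
    refine hspec _ hmem ⟨by simp, ?_⟩
    simp only [Complex.ofReal_re]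
    rw [hr]
    exact div_nonpos_of_nonpos_of_nonneg (by linarith [hs.2]) hs.1

private lemma deriv_inv_aux {N : ℕ} (X : Matrix (Fin N) (Fin N) ℂ)
    (hspec : ∀ z ∈ spectrum ℂ X, ¬(z.im = 0 ∧ z.re ≤ 0))
    (s : ℝ) (hs : s ∈ Set.Icc (0:ℝ) 1) :
    HasDerivAt (fun t : ℝ => (t • (X - 1) + 1)⁻¹)
      (-((s • (X - 1) + 1)⁻¹ * (X - 1) * (s • (X - 1) + 1)⁻¹)) s := by
  have hderivA : HasDerivAt (fun t : ℝ => t • (X - 1) + 1) (X - 1) s := by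
    have := ((hasDerivAt_id' s).smul_const (X - 1)).add_const (1 : Matrix (Fin N) (Fin N) ℂ)
    rw [one_smul] at this
    exact this
  obtain ⟨u, huu⟩ := unit_on_Icc X hspec s hs
  have h1 : HasFDerivAt Ring.inverse
      (-(ContinuousLinearMap.mulLeftRight ℝ _ ↑u⁻¹ ↑u⁻¹)) (s • (X - 1) + 1) := by
    have := hasFDerivAt_ringInverse (𝕜 := ℝ) u
    rwa [huu] at this
  have h2 := h1.comp_hasDerivAt s hderivA
  have hval : ((↑u⁻¹ : Matrix (Fin N) (Fin N) ℂ)) = (s • (X - 1) + 1)⁻¹ := by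
    rw [Matrix.nonsing_inv_eq_ringInverse, ← huu, Ring.inverse_unit]
  simp only [Matrix.nonsing_inv_eq_ringInverse, ← hval]
  refine h2.congr_deriv (Eq.symm (by simp))

theorem principal_log_commute_and_integral {N : ℕ} (X : Matrix (Fin N) (Fin N) ℂ)
    (hX : IsUnit X)
    (hspec : ∀ z ∈ spectrum ℂ X, ¬(z.im = 0 ∧ z.re ≤ 0))
    (L : Matrix (Fin N) (Fin N) ℂ) (hexp : NormedSpace.exp L = X)
    (hstrip : ∀ z ∈ spectrum ℂ L, -Real.pi < z.im ∧ z.im < Real.pi) :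
    (∀ s : ℝ, Commute X L ∧ Commute ((s • (X - 1) + 1)⁻¹) X ∧
      Commute ((s • (X - 1) + 1)⁻¹) L) ∧
    (∫ s in (0:ℝ)..1, ((s • (X - 1) + 1)⁻¹ * (s • (X - 1) + 1)⁻¹)) = X⁻¹ := by
  have hXdet : IsUnit X.det := (Matrix.isUnit_iff_isUnit_det X).mp hX
  have hXL : Commute X L := hexp ▸ (Commute.refl L).exp_left
  have hAX : ∀ s : ℝ, Commute (s • (X - 1) + 1) X := fun s =>
    (((Commute.refl X).sub_left (Commute.one_left X)).smul_left s).add_left (Commute.one_left X)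
  have hAL : ∀ s : ℝ, Commute (s • (X - 1) + 1) L := fun s =>
    ((hXL.sub_left (Commute.one_left L)).smul_left s).add_left (Commute.one_left L)
  have hAXm1 : ∀ s : ℝ, Commute (s • (X - 1) + 1) (X - 1) := fun s =>
    (((Commute.refl (X-1))).smul_left s).add_left (Commute.one_left (X-1))
  constructor
  · exact fun s => ⟨hXL, commute_nonsing_inv_left _ _ (hAX s),
      commute_nonsing_inv_left _ _ (hAL s)⟩
  · set F : ℝ → Matrix (Fin N) (Fin N) ℂ :=
      fun s => (s - 1) • ((s • (X - 1) + 1)⁻¹ * X⁻¹) with hFdef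
    have hXXi : X * X⁻¹ = 1 := Matrix.mul_nonsing_inv X hXdet
    have hXiX : X⁻¹ * X = 1 := Matrix.nonsing_inv_mul X hXdet
    have hF : ∀ s ∈ Set.uIcc (0:ℝ) 1, HasDerivAt F
        ((s • (X - 1) + 1)⁻¹ * (s • (X - 1) + 1)⁻¹) s := by
      intro s hs
      rw [Set.uIcc_of_le zero_le_one] at hs
      set B := (s • (X - 1) + 1)⁻¹ with hB
      have h1 : HasDerivAt (fun t : ℝ => t - 1) 1 s := (hasDerivAt_id s).sub_const 1
      have h2 : HasDerivAt (fun t : ℝ => (t • (X - 1) + 1)⁻¹ * X⁻¹)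
          ((-(B * (X - 1) * B)) * X⁻¹) s := (deriv_inv_aux X hspec s hs).mul_const X⁻¹
      have h3 := h1.smul h2
      refine h3.congr_deriv (Eq.symm ?_)
      -- algebraic identity
      have hu := unit_on_Icc X hspec s hs
      have hudet : IsUnit (s • (X - 1) + 1).det := (Matrix.isUnit_iff_isUnit_det _).mp hu
      have hBA : B * (s • (X - 1) + 1) = 1 := Matrix.nonsing_inv_mul _ hudet
      have hBcomm : B * (X - 1) = (X - 1) * B :=
        (commute_nonsing_inv_left _ _ (hAXm1 s)).eq
      have hBcomm' : ∀ M, B * ((X - 1) * M) = (X - 1) * (B * M) := fun M => by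
        rw [← mul_assoc, hBcomm, mul_assoc]
      have hXdecomp : (s • (X - 1) + 1) + ((1:ℝ) - s) • (X - 1) = X := by module
      have cancel : ∀ P Q : Matrix (Fin N) (Fin N) ℂ, P * X = Q * X → P = Q := by
        intro P Q h
        have := congrArg (fun M => M * X⁻¹) h
        simpa [mul_assoc, hXXi] using this
      apply cancel
      conv_lhs => rw [← hXdecomp]
      simp only [one_smul, add_mul, smul_mul_assoc, neg_mul, mul_add, mul_smul_comm,
        mul_assoc, hXiX, mul_one, hBA, hBcomm, hBcomm', smul_neg]
      have key : s • ((X - 1) * (B * B)) + B * B = B := by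
        have h := congrArg (fun M => B * M) hBA
        simp only [mul_add, mul_smul_comm, mul_one, mul_assoc, hBcomm, hBcomm'] at h
        exact h
      rw [key, ← neg_smul, neg_sub]
      exact add_comm _ _
    have hcont : ContinuousOn (fun s : ℝ => ((s • (X - 1) + 1)⁻¹ * (s • (X - 1) + 1)⁻¹))
        (Set.uIcc (0:ℝ) 1) := by
      intro t ht
      rw [Set.uIcc_of_le zero_le_one] at ht
      have h := (deriv_inv_aux X hspec t ht).continuousAt
      exact (h.mul h).continuousWithinAt
    have hint := hcont.intervalIntegrable (μ := volume)
    have := intervalIntegral.integral_eq_sub_of_hasDerivAt hF hint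
    rw [this]
    simp [hFdef]
end
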